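/- For any ε with 0 < ε ≤ I(X;Y), the rate-privacy function satisfies g_ε(P,W) ≥ ε·H(Y)/I(X;Y). -/
import Mathlib


open Real

/-- Mutual information (in bits) of a joint pmf on finite alphabets. -/
noncomputable def miOf {α γ : Type} [Fintype α] [Fintype γ] (q : α → γ → ℝ) : ℝ :=
  ∑ x : α, ∑ z : γ,
    q x z * Real.logb 2 (q x z / ((∑ z' : γ, q x z') * (∑ x' : α, q x' z)))

/-- The rate-privacy function g_ε(P,W): the supremum of I(Y;Z) over all finite-output
privacy filters P_{Z|Y} forming the Markov chain X → Y → Z with I(X;Z) = ε, for a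
joint pmf p of (X,Y). -/
noncomputable def gRP {α β : Type} [Fintype α] [Fintype β] (p : α → β → ℝ) (ε : ℝ) : ℝ :=
  sSup {r : ℝ | ∃ (n : ℕ) (Q : β → Fin n → ℝ),
    (∀ y z, 0 ≤ Q y z) ∧ (∀ y, ∑ z, Q y z = 1) ∧
    miOf (fun x z => ∑ y : β, p x y * Q y z) = ε ∧
    r = miOf (fun y z => (∑ x : α, p x y) * Q y z)}

/-- I(Y;Z) is at most H(Y). -/
lemma mi_le_ent {β γ : Type} [Fintype β] [Fintype γ] (pY : β → ℝ) (hpY : ∀ y, 0 ≤ pY y)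
    (Q : β → γ → ℝ) (hQ0 : ∀ y z, 0 ≤ Q y z) (hQ1 : ∀ y, ∑ z, Q y z = 1) :
    miOf (fun y z => pY y * Q y z) ≤ -∑ y, pY y * Real.logb 2 (pY y) := by
  have hrow : ∀ b : β, (∑ z' : γ, pY b * Q b z') = pY b := by
    intro b; rw [← Finset.mul_sum, hQ1, mul_one]
  simp only [miOf, hrow]
  rw [← Finset.sum_neg_distrib]
  refine Finset.sum_le_sum fun y _ => ?_
  rcases (hpY y).eq_or_lt with h0 | hpos
  · simp [← h0]
  · have hstep : ∀ z : γ,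
        pY y * Q y z * Real.logb 2 (pY y * Q y z / (pY y * ∑ y' : β, pY y' * Q y' z))
        ≤ pY y * Q y z * Real.logb 2 (pY y)⁻¹ := by
      intro z
      rcases (hQ0 y z).eq_or_lt with hq0 | hqpos
      · simp [← hq0]
      · have hm : 0 < pY y * Q y z := mul_pos hpos hqpos
        have hcol : pY y * Q y z ≤ ∑ y' : β, pY y' * Q y' z :=
          Finset.single_le_sum (fun i _ => mul_nonneg (hpY i) (hQ0 i z)) (Finset.mem_univ y)
        have hcolpos : 0 < ∑ y' : β, pY y' * Q y' z := lt_of_lt_of_le hm hcol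
        have hratio : 0 < pY y * Q y z / (pY y * ∑ y' : β, pY y' * Q y' z) :=
          div_pos hm (mul_pos hpos hcolpos)
        have hle : pY y * Q y z / (pY y * ∑ y' : β, pY y' * Q y' z) ≤ (pY y)⁻¹ := by
          rw [div_le_iff₀ (mul_pos hpos hcolpos), ← mul_assoc, inv_mul_cancel₀ hpos.ne',
            one_mul]
          exact hcol
        exact mul_le_mul_of_nonneg_left
          ((Real.logb_le_logb one_lt_two hratio (inv_pos.2 hpos)).mpr hle) hm.le
    have h2 : ∑ z : γ, pY y * Q y z * Real.logb 2 (pY y)⁻¹ = -(pY y * Real.logb 2 (pY y)) := by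
      rw [← Finset.sum_mul, hrow, Real.logb_inv]; ring
    exact le_trans (Finset.sum_le_sum fun z _ => hstep z) (le_of_eq h2)

/-- For 0 < ε ≤ I(X;Y), g_ε(P,W) ≥ ε·H(Y)/I(X;Y). -/
theorem stmt15 {α β : Type} [Fintype α] [Fintype β] (p : α → β → ℝ)
    (hp0 : ∀ x y, 0 ≤ p x y) (hp1 : ∑ x : α, ∑ y : β, p x y = 1)
    (hI : 0 < miOf p) :
    ∀ ε : ℝ, 0 < ε → ε ≤ miOf p →
      gRP p ε ≥ ε * (-∑ y : β, (∑ x : α, p x y) * Real.logb 2 (∑ x : α, p x y)) / miOf p := by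
  intro ε hε hεI
  classical
  have hIne : miOf p ≠ 0 := ne_of_gt hI
  set d : ℝ := ε / miOf p with hd
  have hδpos : 0 < d := div_pos hε hI
  have hδle : d ≤ 1 := (div_le_one hI).mpr hεI
  have hd0 : d ≠ 0 := ne_of_gt hδpos
  set e := Fintype.equivFin β with he
  set Q : β → Fin (Fintype.card β + 1) → ℝ :=
    fun y z => if z = Fin.last (Fintype.card β) then 1 - d
      else if z = Fin.castSucc (e y) then d else 0 with hQdef
  have hQlast : ∀ y, Q y (Fin.last (Fintype.card β)) = 1 - d := by
    intro y; simp [hQdef]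
  have hQcast : ∀ y i, Q y (Fin.castSucc i) = if i = e y then d else 0 := by
    intro y i
    simp only [hQdef]
    rw [if_neg (Fin.castSucc_lt_last i).ne]
    by_cases h : i = e y
    · rw [if_pos (by rw [h]), if_pos h]
    · rw [if_neg (by simpa [Fin.castSucc_inj] using h), if_neg h]
  have hQ0 : ∀ y z, 0 ≤ Q y z := by
    intro y z
    simp only [hQdef]
    split_ifs <;> linarith
  have hQ1 : ∀ y, ∑ z, Q y z = 1 := by
    intro y
    rw [Fin.sum_univ_castSucc]
    simp only [hQcast, hQlast]
    rw [Finset.sum_eq_single (e y)]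
    · rw [if_pos rfl]; ring
    · intro b _ hb; rw [if_neg hb]
    · intro h; exact absurd (Finset.mem_univ _) h
  -- generic sums over β against a column of Q
  have hsum_cast : ∀ (w : β → ℝ) (i : Fin (Fintype.card β)),
      ∑ y, w y * Q y (Fin.castSucc i) = d * w (e.symm i) := by
    intro w i
    simp only [hQcast, mul_ite, mul_zero]
    rw [Finset.sum_eq_single (e.symm i)]
    · rw [if_pos (e.apply_symm_apply i).symm]; ring
    · intro b _ hb
      rw [if_neg]
      intro h
      exact hb (by rw [h, Equiv.symm_apply_apply])
    · intro h; exact absurd (Finset.mem_univ _) h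
  have hsum_last : ∀ (w : β → ℝ),
      ∑ y, w y * Q y (Fin.last (Fintype.card β)) = (1 - d) * ∑ y, w y := by
    intro w
    simp only [hQlast]
    rw [← Finset.sum_mul, mul_comm]
  have hrow1 : ∀ x, ∑ z, (∑ y, p x y * Q y z) = ∑ y, p x y := by
    intro x
    rw [Finset.sum_comm]
    simp only [← Finset.mul_sum, hQ1, mul_one]
  have hrow2 : ∀ y, ∑ z, (∑ x, p x y) * Q y z = ∑ x, p x y := by
    intro y; rw [← Finset.mul_sum, hQ1, mul_one]
  have hpY1 : ∑ y : β, ∑ x : α, p x y = 1 := by rw [Finset.sum_comm]; exact hp1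
  -- scalar identities
  have key1 : ∀ a b c : ℝ,
      (d * a) * Real.logb 2 ((d * a) / (b * (d * c))) = d * (a * Real.logb 2 (a / (b * c))) := by
    intro a b c
    have h : (d * a) / (b * (d * c)) = a / (b * c) := by
      rw [mul_left_comm b d c, mul_div_mul_left a (b * c) hd0]
    rw [h]; ring
  have key2 : ∀ b : ℝ,
      ((1 - d) * b) * Real.logb 2 (((1 - d) * b) / (b * ((1 - d) * 1))) = 0 := by
    intro b
    rcases eq_or_ne b 0 with h | h
    · simp [h]
    rcases eq_or_ne (1 - d) 0 with h1 | h1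
    · simp [h1]
    have : ((1 - d) * b) / (b * ((1 - d) * 1)) = 1 := by
      rw [mul_one, mul_comm b (1 - d)]; exact div_self (mul_ne_zero h1 h)
    rw [this, Real.logb_one, mul_zero]
  have key3 : ∀ c : ℝ,
      (c * d) * Real.logb 2 ((c * d) / (c * (d * c))) = d * (-(c * Real.logb 2 c)) := by
    intro c
    rcases eq_or_ne c 0 with h | h
    · simp [h]
    have hc : (c * d) / (c * (d * c)) = c⁻¹ := by
      field_simp
    rw [hc, Real.logb_inv]; ring
  have key4 : ∀ c : ℝ,
      (c * (1 - d)) * Real.logb 2 ((c * (1 - d)) / (c * ((1 - d) * 1))) = 0 := by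
    intro c
    rcases eq_or_ne c 0 with h | h
    · simp [h]
    rcases eq_or_ne (1 - d) 0 with h1 | h1
    · simp [h1]
    have : (c * (1 - d)) / (c * ((1 - d) * 1)) = 1 := by
      rw [mul_one]; exact div_self (mul_ne_zero h h1)
    rw [this, Real.logb_one, mul_zero]
  -- I(X;Z) = ε
  have hIXZ : miOf (fun x z => ∑ y : β, p x y * Q y z) = ε := by
    simp only [miOf]
    simp only [hrow1]
    simp only [Fin.sum_univ_castSucc]
    simp only [hsum_cast, hsum_last]
    simp only [← Finset.mul_sum]
    simp only [hp1]
    simp only [key1, key2, add_zero]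
    simp only [← Finset.mul_sum]
    have hre : ∀ x, (∑ i : Fin (Fintype.card β),
        p x (e.symm i) * Real.logb 2 (p x (e.symm i) /
          ((∑ y, p x y) * ∑ x', p x' (e.symm i))))
        = ∑ y, p x y * Real.logb 2 (p x y / ((∑ y', p x y') * ∑ x', p x' y)) := by
      intro x
      exact Equiv.sum_comp e.symm
        (fun y => p x y * Real.logb 2 (p x y / ((∑ y', p x y') * ∑ x', p x' y)))
    simp only [hre]
    have : (∑ x, ∑ y, p x y * Real.logb 2 (p x y / ((∑ y', p x y') * ∑ x', p x' y)))
        = miOf p := rfl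
    rw [this, hd]
    exact div_mul_cancel₀ ε hIne
  -- I(Y;Z) = d * H(Y)
  have hIYZ : miOf (fun y z => (∑ x : α, p x y) * Q y z)
      = d * (-∑ y : β, (∑ x : α, p x y) * Real.logb 2 (∑ x : α, p x y)) := by
    simp only [miOf]
    simp only [hrow2]
    have per_y : ∀ y, (∑ z, ((∑ x, p x y) * Q y z) * Real.logb 2 (((∑ x, p x y) * Q y z) /
          ((∑ x, p x y) * (∑ y', (∑ x, p x y') * Q y' z))))
        = d * (-((∑ x, p x y) * Real.logb 2 (∑ x, p x y))) := by
      intro y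
      rw [Fin.sum_univ_castSucc]
      simp only [hsum_cast, hsum_last]
      simp only [hQlast, hpY1]
      rw [Finset.sum_eq_single (e y)]
      · rw [hQcast, if_pos rfl, Equiv.symm_apply_apply, key4, add_zero, key3]
      · intro b _ hb
        rw [hQcast, if_neg hb, mul_zero, zero_mul]
      · intro h; exact absurd (Finset.mem_univ _) h
    calc (∑ y, ∑ z, ((∑ x, p x y) * Q y z) * Real.logb 2 (((∑ x, p x y) * Q y z) /
          ((∑ x, p x y) * (∑ y', (∑ x, p x y') * Q y' z))))
        = ∑ y, d * (-((∑ x, p x y) * Real.logb 2 (∑ x, p x y))) :=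
          Finset.sum_congr rfl fun y _ => per_y y
      _ = d * ∑ y, -((∑ x, p x y) * Real.logb 2 (∑ x, p x y)) := by rw [Finset.mul_sum]
      _ = d * (-∑ y, (∑ x, p x y) * Real.logb 2 (∑ x, p x y)) := by
          rw [Finset.sum_neg_distrib]
  rw [ge_iff_le, gRP]
  apply le_csSup
  · refine ⟨-∑ y : β, (∑ x : α, p x y) * Real.logb 2 (∑ x : α, p x y), ?_⟩
    rintro r ⟨n, Q', hQ'0, hQ'1, -, rfl⟩
    exact mi_le_ent _ (fun y => Finset.sum_nonneg fun x _ => hp0 x y) Q' hQ'0 hQ'1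
  · refine ⟨Fintype.card β + 1, Q, hQ0, hQ1, hIXZ, ?_⟩
    rw [hIYZ, hd, div_mul_eq_mul_div]
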